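/- Let h be a nonzero integer and p an odd prime not dividing h. Then for positive integers n, the random variable product X_p Y_p Z_p, where X_p(n) = d_k(p^{v_p(n+h)}), Y_p(n) = d_l(p^{v_p(n)}), Z_p(n) = d_m(p^{v_p(n-h)}), has natural-density expectation E(X_p Y_p Z_p) = (1 - 1/p)^{1-k} + (1 - 1/p)^{1-l} + (1 - 1/p)^{1-m} - 2. -/

import Mathlib

/-!
For `n > h` at most one of `n + h`, `n`, `n - h` is divisible by `p` (a common prime factor
would divide `h` or `2h`), so the triple of `p`-adic valuations lies on the coordinate axes of
`ℕ³`. Its law is therefore determined by the law of a single valuation,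
`δ(v_p(n + c) = j) = p⁻ʲ (1 - 1/p)`, and on the axes the product of the three divisor values
reduces to one factor `d_k(pᵃ) = C(k + a - 1, a)`. Since `d_k(pᵃ) > a` for `k ≥ 2`, each level set
of the product is a finite union of level sets of the triple, so the expectation is the sum of
the three series `∑ₐ C(k + a - 1, a) p⁻ᵃ (1 - 1/p) = (1 - 1/p)^(1 - k)`, corrected by `2` for the
origin, which each of them counts.
-/

/-- `D k n` is the number of `k`-tuples of positive integers with product `n`. -/
def D (k n : ℕ) : ℕ :=
  ((Fintype.piFinset fun _ : Fin k => Finset.Icc 1 n).filter fun f => ∏ i, f i = n).card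

open scoped Classical in
/-- `HasDensity A d` : the set `A` of positive integers has natural density `d`. -/
noncomputable def HasDensity (A : Set ℕ) (d : ℝ) : Prop :=
  Filter.Tendsto (fun x : ℕ => (((Finset.Icc 1 x).filter fun n => n ∈ A).card : ℝ) / x)
    Filter.atTop (nhds d)

/-- `HasExpectation F e` : each level set of `F` has a natural density, and
`∑ v, v · δ(F = v) = e`. -/
noncomputable def HasExpectation (F : ℕ → ℕ) (e : ℝ) : Prop :=
  ∃ δ : ℕ → ℝ, (∀ v : ℕ, HasDensity {n : ℕ | F n = v} (δ v)) ∧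
    HasSum (fun v : ℕ => (v : ℝ) * δ v) e

open Filter Topology Finset

open Classical in
noncomputable def countUpTo (A : Set ℕ) (x : ℕ) : ℕ := #{n ∈ Icc 1 x | n ∈ A}

theorem hasDensity_iff {A : Set ℕ} {d : ℝ} :
    HasDensity A d ↔ Tendsto (fun x : ℕ => (countUpTo A x : ℝ) / x) atTop (𝓝 d) := Iff.rfl

lemma tendsto_div_of_abs_sub_le {u v : ℕ → ℝ} {d C : ℝ}
    (hu : Tendsto (fun x : ℕ => u x / x) atTop (𝓝 d)) (huv : ∀ x, |v x - u x| ≤ C) :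
    Tendsto (fun x : ℕ => v x / x) atTop (𝓝 d) := by
  have h₀ : Tendsto (fun x : ℕ => (v x - u x) / x) atTop (𝓝 0) := by
    refine squeeze_zero_norm (fun x => ?_) (tendsto_const_div_atTop_nhds_zero_nat C)
    rw [norm_div, Real.norm_natCast]
    exact div_le_div_of_nonneg_right (huv x) x.cast_nonneg
  simpa [sub_div] using hu.add h₀

lemma abs_count_shift_sub_count_le (P : ℕ → Prop) [DecidablePred P] (c x : ℕ) :
    |(Nat.count (fun k => P (c + k)) x : ℝ) - Nat.count P x| ≤ c := by
  have h := congrArg (Nat.cast (R := ℝ))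
    ((Nat.count_add (p := P) c x).symm.trans (add_comm c x ▸ Nat.count_add (p := P) x c))
  have h₁ : (Nat.count P c : ℝ) ≤ c := by exact_mod_cast Nat.count_le _
  have h₂ : (Nat.count (fun k => P (x + k)) c : ℝ) ≤ c := by exact_mod_cast Nat.count_le _
  push_cast at h
  rw [abs_le]
  constructor <;> linarith [(Nat.count P c).cast_nonneg (α := ℝ),
    (Nat.count (fun k => P (x + k)) c).cast_nonneg (α := ℝ)]

open Classical in
lemma countUpTo_eq_count (A : Set ℕ) (x : ℕ) :
    countUpTo A x = Nat.count (fun k => k + 1 ∈ A) x := by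
  rw [countUpTo, Nat.count_eq_card_filter_range, ← Ico_add_one_right_eq_Icc, range_eq_Ico,
    ← zero_add 1, ← map_add_right_Ico, filter_map, card_map]
  rfl

theorem hasDensity_add_iff {A : Set ℕ} {d : ℝ} (c : ℕ) :
    HasDensity {n | n + c ∈ A} d ↔ HasDensity A d := by
  have hclose (x : ℕ) : |(countUpTo {n | n + c ∈ A} x : ℝ) - countUpTo A x| ≤ c := by
    rw [countUpTo_eq_count, countUpTo_eq_count]
    convert abs_count_shift_sub_count_le (fun k => k + 1 ∈ A) c x using 5
    funext k
    exact congrArg (· ∈ A) (by ring)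
  rw [hasDensity_iff, hasDensity_iff]
  refine ⟨fun h => tendsto_div_of_abs_sub_le (C := c) h fun x => ?_,
    fun h => tendsto_div_of_abs_sub_le h hclose⟩
  rw [abs_sub_comm]
  exact hclose x

theorem HasDensity.congr_eventually {A B : Set ℕ} {d : ℝ} (hA : HasDensity A d)
    (hAB : ∀ᶠ n in atTop, n ∈ A ↔ n ∈ B) : HasDensity B d := by
  obtain ⟨N, hN⟩ := eventually_atTop.mp hAB
  have hshift : {n | n + N ∈ B} = {n | n + N ∈ A} :=
    Set.ext fun n => (hN (n + N) (Nat.le_add_left N n)).symm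
  rw [← hasDensity_add_iff N] at hA ⊢
  rwa [hshift]

theorem hasDensity_empty : HasDensity ∅ 0 := by
  simp [hasDensity_iff, countUpTo]

theorem hasDensity_zero_of_eventually_notMem {A : Set ℕ} (hA : ∀ᶠ n in atTop, n ∉ A) :
    HasDensity A 0 :=
  hasDensity_empty.congr_eventually (hA.mono fun n hn => by simp [hn])

theorem hasDensity_univ : HasDensity Set.univ 1 := by
  refine tendsto_const_nhds.congr' ?_
  filter_upwards [eventually_ne_atTop 0] with x hx
  simp [hx]

lemma countUpTo_union_add_inter (A B : Set ℕ) (x : ℕ) :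
    countUpTo (A ∪ B) x + countUpTo (A ∩ B) x = countUpTo A x + countUpTo B x := by
  rw [countUpTo, countUpTo, countUpTo, countUpTo, eq_comm, ← card_union_add_card_inter]
  congr 2 <;> ext n <;> simp only [mem_union, mem_inter, mem_filter, Set.mem_union,
    Set.mem_inter_iff] <;> tauto

theorem HasDensity.union {A B : Set ℕ} {a b : ℝ} (hA : HasDensity A a) (hB : HasDensity B b)
    (hAB : HasDensity (A ∩ B) 0) : HasDensity (A ∪ B) (a + b) := by
  have hcount (x : ℕ) : (countUpTo (A ∪ B) x : ℝ) / x
      = countUpTo A x / x + countUpTo B x / x - countUpTo (A ∩ B) x / x := by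
    rw [← add_div, ← sub_div]
    congr 1
    rw [eq_sub_iff_add_eq]
    exact_mod_cast countUpTo_union_add_inter A B x
  rw [hasDensity_iff] at *
  simpa [hcount] using (hA.add hB).sub hAB

theorem HasDensity.diff {A B : Set ℕ} {a b : ℝ} (hA : HasDensity A a) (hB : HasDensity B b)
    (hBA : B ⊆ A) : HasDensity (A \ B) (a - b) := by
  have hcount (x : ℕ) : (countUpTo (A \ B) x : ℝ) / x = countUpTo A x / x - countUpTo B x / x := by
    have h := countUpTo_union_add_inter (A \ B) B x
    rw [Set.sdiff_union_of_subset hBA, Set.sdiff_inter_self] at h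
    rw [← sub_div]
    congr 1
    rw [eq_sub_iff_add_eq]
    exact_mod_cast (by simpa [countUpTo] using h.symm)
  rw [hasDensity_iff] at *
  simpa [hcount] using hA.sub hB

theorem HasDensity.compl {A : Set ℕ} {a : ℝ} (hA : HasDensity A a) : HasDensity Aᶜ (1 - a) := by
  simpa [Set.compl_eq_univ_sdiff] using hasDensity_univ.diff hA (Set.subset_univ A)

theorem hasDensity_biUnion {ι : Type*} (s : Finset ι) {A : ι → Set ℕ} {d : ι → ℝ}
    (hA : ∀ i ∈ s, HasDensity (A i) (d i)) (hdisj : (s : Set ι).PairwiseDisjoint A) :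
    HasDensity (⋃ i ∈ s, A i) (∑ i ∈ s, d i) := by
  classical
  induction s using Finset.induction_on with
  | empty => simpa using hasDensity_empty
  | insert i s hi ih =>
    rw [coe_insert, Set.pairwiseDisjoint_insert] at hdisj
    rw [set_biUnion_insert, sum_insert hi]
    have hempty : A i ∩ ⋃ j ∈ s, A j = ∅ := Set.disjoint_iff_inter_eq_empty.mp <|
      Set.disjoint_iUnion₂_right.mpr fun j hj => hdisj.2 j hj (ne_of_mem_of_not_mem hj hi).symm
    refine (hA i (mem_insert_self i s)).union
      (ih (fun j hj => hA j (mem_insert_of_mem hj)) hdisj.1) ?_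
    rw [hempty]
    exact hasDensity_empty

theorem hasDensity_dvd {q : ℕ} (hq : 0 < q) : HasDensity {n | q ∣ n} (1 / q) := by
  have hcard (x : ℕ) : countUpTo {n | q ∣ n} x = x / q := by
    simpa [countUpTo, ← Icc_add_one_left_eq_Ioc] using Nat.Ioc_filter_dvd_card_eq_div x q
  rw [hasDensity_iff]
  refine tendsto_div_of_abs_sub_le (u := fun x => x / (q : ℝ)) (C := 1) ?_ fun x => ?_
  · refine tendsto_const_nhds.congr' ?_
    filter_upwards [eventually_ne_atTop 0] with x hx
    field_simp
  · have hq' : (0 : ℝ) < q := by exact_mod_cast hq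
    have h₁ : ((x / q : ℕ) : ℝ) ≤ x / q := Nat.cast_div_le
    have h₂ : (x : ℝ) / q - 1 < (x / q : ℕ) := by
      rw [sub_lt_iff_lt_add, div_lt_iff₀ hq', add_mul, one_mul]
      exact_mod_cast Nat.lt_div_mul_add hq
    rw [hcard, abs_le]
    constructor <;> linarith

theorem hasDensity_dvd_add {q : ℕ} (hq : 0 < q) (c : ℕ) : HasDensity {n | q ∣ n + c} (1 / q) :=
  (hasDensity_add_iff (A := {n | q ∣ n}) c).mpr (hasDensity_dvd hq)

theorem hasDensity_dvd_sub {q : ℕ} (hq : 0 < q) (c : ℕ) : HasDensity {n | q ∣ n - c} (1 / q) :=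
  (hasDensity_add_iff (A := {n | q ∣ n - c}) c).mp (by simpa using hasDensity_dvd hq)

theorem hasDensity_factorization_eq {p : ℕ} (hp : p.Prime) {s : ℕ → ℕ}
    (hs : ∀ q, 0 < q → HasDensity {n | q ∣ s n} (1 / q)) (hs₀ : ∀ᶠ n in atTop, s n ≠ 0) (j : ℕ) :
    HasDensity {n | (s n).factorization p = j} ((1 / p) ^ j * (1 - 1 / p)) := by
  have hsub : {n | p ^ (j + 1) ∣ s n} ⊆ {n | p ^ j ∣ s n} :=
    fun n hn => (pow_dvd_pow p j.le_succ).trans hn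
  have h := (hs _ (pow_pos hp.pos j)).diff (hs _ (pow_pos hp.pos (j + 1))) hsub
  have hval : (1 : ℝ) / ↑(p ^ j) - 1 / ↑(p ^ (j + 1)) = (1 / p) ^ j * (1 - 1 / p) := by
    push_cast
    ring
  rw [hval] at h
  refine h.congr_eventually ?_
  filter_upwards [hs₀] with n hn
  simp only [Set.mem_sdiff, Set.mem_ofPred_eq, hp.pow_dvd_iff_le_factorization hn]
  omega

/-- Natural density is only finitely additive, hence the finiteness of the fibres of `g`. -/
theorem hasExpectation_comp {α : Type*} {X : ℕ → α} {π : α → ℝ} {g : α → ℕ} {e : ℝ}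
    (hX : ∀ x, HasDensity {n | X n = x} (π x)) (hg : ∀ v, (g ⁻¹' {v}).Finite)
    (he : HasSum (fun x => (g x : ℝ) * π x) e) : HasExpectation (fun n => g (X n)) e := by
  refine ⟨fun v => ∑ x ∈ (hg v).toFinset, π x, fun v => ?_, ?_⟩
  · have hfiber : {n | g (X n) = v} = ⋃ x ∈ (hg v).toFinset, {n | X n = x} := by
      ext n
      simp
    rw [hfiber]
    exact hasDensity_biUnion _ (fun x _ => hX x) fun x _ y _ hxy =>
      Set.disjoint_left.mpr fun n hx hy => hxy (hx.symm.trans hy)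
  · refine (he.tsum_fiberwise g).congr_fun fun v => ?_
    dsimp only
    rw [Finset.mul_sum, ← Finset.tsum_subtype', Set.Finite.coe_toFinset]
    exact tsum_congr fun x => by rw [show g x = v from x.2]

/-- The joint law of three `ℕ`-valued variables with marginals `ρ₁ ρ₂ ρ₃` of which at most one is
nonzero at a time. It lives on the coordinate axes; the origin is counted by all three marginals,
whence the correction `- 2`. -/
def axesLaw (ρ₁ ρ₂ ρ₃ : ℕ → ℝ) (x : ℕ × ℕ × ℕ) : ℝ :=
  (if x.2.1 = 0 ∧ x.2.2 = 0 then ρ₁ x.1 else 0) + (if x.1 = 0 ∧ x.2.2 = 0 then ρ₂ x.2.1 else 0)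
    + (if x.1 = 0 ∧ x.2.1 = 0 then ρ₃ x.2.2 else 0) - if x = 0 then 2 else 0

section AxesLaw

variable {u₁ u₂ u₃ : ℕ → ℕ} {ρ₁ ρ₂ ρ₃ : ℕ → ℝ}

theorem hasDensity_eq_zero_zero_zero (hρ₁ : HasDensity {n | u₁ n = 0} (ρ₁ 0))
    (hρ₂ : HasDensity {n | u₂ n = 0} (ρ₂ 0)) (hρ₃ : HasDensity {n | u₃ n = 0} (ρ₃ 0))
    (h₁₂ : ∀ᶠ n in atTop, u₁ n = 0 ∨ u₂ n = 0) (h₁₃ : ∀ᶠ n in atTop, u₁ n = 0 ∨ u₃ n = 0)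
    (h₂₃ : ∀ᶠ n in atTop, u₂ n = 0 ∨ u₃ n = 0) :
    HasDensity {n | u₁ n = 0 ∧ u₂ n = 0 ∧ u₃ n = 0} (ρ₁ 0 + ρ₂ 0 + ρ₃ 0 - 2) := by
  have hunion := (hρ₁.compl.union hρ₂.compl <| hasDensity_zero_of_eventually_notMem <|
      h₁₂.mono fun n hn => by simpa [or_iff_not_imp_left] using hn).union hρ₃.compl <|
    hasDensity_zero_of_eventually_notMem <| (h₁₃.and h₂₃).mono fun n hn => by
      simp only [Set.mem_inter_iff, Set.mem_union, Set.mem_compl_iff, Set.mem_ofPred_eq]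
      tauto
  convert hunion.compl using 1
  · ext n
    simp only [Set.mem_ofPred_eq, Set.mem_compl_iff, Set.mem_union]
    tauto
  · ring

theorem hasDensity_eq_axesLaw (hρ₁ : ∀ j, HasDensity {n | u₁ n = j} (ρ₁ j))
    (hρ₂ : ∀ j, HasDensity {n | u₂ n = j} (ρ₂ j)) (hρ₃ : ∀ j, HasDensity {n | u₃ n = j} (ρ₃ j))
    (h₁₂ : ∀ᶠ n in atTop, u₁ n = 0 ∨ u₂ n = 0) (h₁₃ : ∀ᶠ n in atTop, u₁ n = 0 ∨ u₃ n = 0)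
    (h₂₃ : ∀ᶠ n in atTop, u₂ n = 0 ∨ u₃ n = 0) (x : ℕ × ℕ × ℕ) :
    HasDensity {n | (u₁ n, u₂ n, u₃ n) = x} (axesLaw ρ₁ ρ₂ ρ₃ x) := by
  obtain ⟨a, b, c⟩ := x
  simp only [Prod.mk.injEq]
  have hall := (h₁₂.and h₁₃).and h₂₃
  rcases eq_or_ne a 0 with rfl | ha <;> rcases eq_or_ne b 0 with rfl | hb <;>
    rcases eq_or_ne c 0 with rfl | hc
  · simpa [axesLaw] using hasDensity_eq_zero_zero_zero (hρ₁ 0) (hρ₂ 0) (hρ₃ 0) h₁₂ h₁₃ h₂₃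
  · simpa [axesLaw, hc] using (hρ₃ c).congr_eventually <| hall.mono fun n hn => by
      simp only [Set.mem_ofPred_eq]; omega
  · simpa [axesLaw, hb] using (hρ₂ b).congr_eventually <| hall.mono fun n hn => by
      simp only [Set.mem_ofPred_eq]; omega
  · simpa [axesLaw, hb, hc] using hasDensity_zero_of_eventually_notMem <| hall.mono fun n hn => by
      simp only [Set.mem_ofPred_eq]; omega
  · simpa [axesLaw, ha] using (hρ₁ a).congr_eventually <| hall.mono fun n hn => by
      simp only [Set.mem_ofPred_eq]; omega
  all_goals simpa [axesLaw, *] using hasDensity_zero_of_eventually_notMem <|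
    hall.mono fun n hn => by simp only [Set.mem_ofPred_eq]; omega

theorem hasSum_mul_axesLaw {f₁ f₂ f₃ : ℕ → ℕ} (hf₁ : f₁ 0 = 1) (hf₂ : f₂ 0 = 1) (hf₃ : f₃ 0 = 1)
    {s₁ s₂ s₃ : ℝ} (hs₁ : HasSum (fun j => (f₁ j : ℝ) * ρ₁ j) s₁)
    (hs₂ : HasSum (fun j => (f₂ j : ℝ) * ρ₂ j) s₂) (hs₃ : HasSum (fun j => (f₃ j : ℝ) * ρ₃ j) s₃) :
    HasSum (fun x : ℕ × ℕ × ℕ => ((f₁ x.1 * f₂ x.2.1 * f₃ x.2.2 : ℕ) : ℝ) * axesLaw ρ₁ ρ₂ ρ₃ x)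
      (s₁ + s₂ + s₃ - 2) := by
  have e₁ : HasSum (fun x : ℕ × ℕ × ℕ =>
      if x.2.1 = 0 ∧ x.2.2 = 0 then (f₁ x.1 : ℝ) * ρ₁ x.1 else 0) s₁ := by
    refine (Function.Injective.hasSum_iff (g := fun j => (j, 0, 0)) (fun i j h => by simpa using h)
      fun x hx => if_neg fun h0 => hx ⟨x.1, Prod.ext rfl (Prod.ext h0.1.symm h0.2.symm)⟩).mp ?_
    exact hs₁.congr_fun fun j => by simp
  have e₂ : HasSum (fun x : ℕ × ℕ × ℕ =>
      if x.1 = 0 ∧ x.2.2 = 0 then (f₂ x.2.1 : ℝ) * ρ₂ x.2.1 else 0) s₂ := by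
    refine (Function.Injective.hasSum_iff (g := fun j => (0, j, 0)) (fun i j h => by simpa using h)
      fun x hx => if_neg fun h0 => hx ⟨x.2.1, Prod.ext h0.1.symm (Prod.ext rfl h0.2.symm)⟩).mp ?_
    exact hs₂.congr_fun fun j => by simp
  have e₃ : HasSum (fun x : ℕ × ℕ × ℕ =>
      if x.1 = 0 ∧ x.2.1 = 0 then (f₃ x.2.2 : ℝ) * ρ₃ x.2.2 else 0) s₃ := by
    refine (Function.Injective.hasSum_iff (g := fun j => (0, 0, j)) (fun i j h => by simpa using h)
      fun x hx => if_neg fun h0 => hx ⟨x.2.2, Prod.ext h0.1.symm (Prod.ext h0.2.symm rfl)⟩).mp ?_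
    exact hs₃.congr_fun fun j => by simp
  refine (((e₁.add e₂).add e₃).sub (hasSum_ite_eq (0 : ℕ × ℕ × ℕ) (2 : ℝ))).congr_fun ?_
  rintro ⟨a, b, c⟩
  rcases eq_or_ne a 0 with rfl | ha <;> rcases eq_or_ne b 0 with rfl | hb <;>
    rcases eq_or_ne c 0 with rfl | hc <;> simp [axesLaw, *]

end AxesLaw

lemma finite_preimage_mul {f₁ f₂ f₃ : ℕ → ℕ} (h₁ : ∀ j, j < f₁ j) (h₂ : ∀ j, j < f₂ j)
    (h₃ : ∀ j, j < f₃ j) (v : ℕ) :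
    ((fun x : ℕ × ℕ × ℕ => f₁ x.1 * f₂ x.2.1 * f₃ x.2.2) ⁻¹' {v}).Finite := by
  refine ((Set.finite_Iic v).prod ((Set.finite_Iic v).prod (Set.finite_Iic v))).subset ?_
  rintro ⟨a, b, c⟩ hv
  simp only [Set.mem_preimage, Set.mem_singleton_iff] at hv
  subst hv
  have hv₀ : 0 < f₁ a * f₂ b * f₃ c :=
    Nat.mul_pos (Nat.mul_pos (h₁ a).pos (h₂ b).pos) (h₃ c).pos
  exact ⟨(h₁ a).le.trans (Nat.le_of_dvd hv₀ (dvd_mul_of_dvd_left (dvd_mul_right _ _) _)),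
    (h₂ b).le.trans (Nat.le_of_dvd hv₀ (dvd_mul_of_dvd_left (dvd_mul_left _ _) _)),
    (h₃ c).le.trans (Nat.le_of_dvd hv₀ (dvd_mul_left _ _))⟩

lemma factorization_eq_zero_or_of_not_dvd_sub {p a b : ℕ} (h : ¬p ∣ a - b) :
    a.factorization p = 0 ∨ b.factorization p = 0 := by
  by_contra! hab
  exact h (Nat.dvd_sub (Nat.dvd_of_factorization_pos hab.1) (Nat.dvd_of_factorization_pos hab.2))

theorem hasDensity_factorization_triple_eq {p h : ℕ} (hp : p.Prime) (hodd : Odd p)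
    (hph : ¬p ∣ h) (x : ℕ × ℕ × ℕ) :
    HasDensity {n | ((n + h).factorization p, n.factorization p, (n - h).factorization p) = x}
      (axesLaw (fun j => (1 / p) ^ j * (1 - 1 / p)) (fun j => (1 / p) ^ j * (1 - 1 / p))
        (fun j => (1 / p) ^ j * (1 - 1 / p)) x) := by
  have hph₂ : ¬p ∣ 2 * h := hp.coprime_iff_not_dvd.mp
    (Nat.Coprime.mul_right hodd.coprime_two_right (hp.coprime_iff_not_dvd.mpr hph))
  exact hasDensity_eq_axesLaw
    (hasDensity_factorization_eq hp (s := fun n => n + h) (fun q hq => hasDensity_dvd_add hq h)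
      (eventually_gt_atTop 0 |>.mono fun n hn => by omega))
    (hasDensity_factorization_eq hp (s := fun n => n) (fun q hq => hasDensity_dvd hq)
      (eventually_gt_atTop 0 |>.mono fun n hn => by omega))
    (hasDensity_factorization_eq hp (s := fun n => n - h) (fun q hq => hasDensity_dvd_sub hq h)
      (eventually_gt_atTop h |>.mono fun n hn => by omega))
    (.of_forall fun n => factorization_eq_zero_or_of_not_dvd_sub (by simpa using hph))
    ((eventually_ge_atTop h).mono fun n hn =>
      factorization_eq_zero_or_of_not_dvd_sub (by rwa [show n + h - (n - h) = 2 * h by omega]))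
    ((eventually_ge_atTop h).mono fun n hn =>
      factorization_eq_zero_or_of_not_dvd_sub (by rwa [show n - (n - h) = h by omega])) x

theorem D_prime_pow {p : ℕ} (hp : p.Prime) (k j : ℕ) : D k (p ^ j) = (k + j - 1).choose j := by
  have hcard := card_finsuppAntidiag_nat_eq_choose (s := (univ : Finset (Fin k))) j
  rw [card_univ, Fintype.card_fin] at hcard
  rw [← hcard, D]
  have hpow (m : ℕ) : (p ^ m).factorization p = m := by simp [hp.factorization_pow]
  refine card_nbij' (fun f => Finsupp.equivFunOnFinite.symm fun i => (f i).factorization p)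
    (fun e i => p ^ e i) (fun f hf => ?_) (fun e he => ?_) (fun f hf => ?_) (fun e _ => ?_)
  · simp only [coe_filter, Fintype.mem_piFinset, mem_Icc, Set.mem_ofPred_eq] at hf
    have hprod := congrArg (fun n => n.factorization p) hf.2
    simp only [hpow] at hprod
    rw [Nat.factorization_prod fun i _ => (Nat.one_le_iff_ne_zero.mp (hf.1 i).1)] at hprod
    simpa [mem_finsuppAntidiag] using hprod
  · simp only [mem_coe, mem_finsuppAntidiag, subset_univ, and_true] at he
    simp only [coe_filter, Fintype.mem_piFinset, mem_Icc, Set.mem_ofPred_eq]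
    refine ⟨fun i => ⟨Nat.one_le_pow _ _ hp.pos, Nat.pow_le_pow_right hp.pos ?_⟩, ?_⟩
    · exact he ▸ single_le_sum (fun i _ => Nat.zero_le _) (mem_univ i)
    · rw [prod_pow_eq_pow_sum, ← he]
  · simp only [coe_filter, Fintype.mem_piFinset, mem_Icc, Set.mem_ofPred_eq] at hf
    funext i
    obtain ⟨m, -, hm⟩ := (Nat.dvd_prime_pow hp).1 (hf.2 ▸ dvd_prod_of_mem f (mem_univ i))
    simp only [Finsupp.coe_equivFunOnFinite_symm, hm, hpow]
  · ext i
    exact hpow (e i)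

lemma lt_choose_add_sub_one {k : ℕ} (hk : 2 ≤ k) (j : ℕ) : j < (k + j - 1).choose j :=
  calc j < (j + 1).choose j := by rw [Nat.choose_succ_self_right]; exact j.lt_succ_self
    _ ≤ (k + j - 1).choose j := Nat.choose_le_choose j (by omega)

theorem hasSum_choose_mul_geometric_mul_one_sub {r : ℝ} (hr₀ : 0 ≤ r) (hr₁ : r < 1) {k : ℕ}
    (hk : 1 ≤ k) :
    HasSum (fun j => ((k + j - 1).choose j : ℝ) * (r ^ j * (1 - r))) ((1 - r) ^ (1 - (k : ℤ))) := by
  obtain ⟨K, rfl⟩ : ∃ K, k = K + 1 := ⟨k - 1, by omega⟩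
  have h := (hasSum_choose_mul_geometric_of_norm_lt_one K
    (by rwa [Real.norm_of_nonneg hr₀] : ‖r‖ < 1)).mul_right (1 - r)
  have hval : 1 / (1 - r) ^ (K + 1) * (1 - r) = (1 - r) ^ (1 - ((K + 1 : ℕ) : ℤ)) := by
    have : 1 - r ≠ 0 := by linarith
    rw [show 1 - ((K + 1 : ℕ) : ℤ) = -(K : ℤ) by push_cast; ring, zpow_neg, zpow_natCast]
    field_simp
    ring
  rw [hval] at h
  refine h.congr_fun fun j => ?_
  rw [show K + 1 + j - 1 = j + K by omega, Nat.choose_symm_add, mul_assoc]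

lemma lt_D_prime_pow {p k : ℕ} (hp : p.Prime) (hk : 2 ≤ k) (j : ℕ) : j < D k (p ^ j) :=
  D_prime_pow hp k j ▸ lt_choose_add_sub_one hk j

theorem hasSum_D_prime_pow_mul {p k : ℕ} (hp : p.Prime) (hk : 1 ≤ k) :
    HasSum (fun j => (D k (p ^ j) : ℝ) * ((1 / p) ^ j * (1 - 1 / p)))
      ((1 - 1 / (p : ℝ)) ^ (1 - (k : ℤ))) := by
  have hp₁ : (1 : ℝ) / p < 1 :=
    (div_lt_one (by exact_mod_cast hp.pos)).mpr (by exact_mod_cast hp.one_lt)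
  simpa only [D_prime_pow hp] using hasSum_choose_mul_geometric_mul_one_sub (by positivity) hp₁ hk

theorem expectation_triple_coprime_case_general (k l m : ℕ) (hk : 2 ≤ k) (hl : 2 ≤ l) (hm : 2 ≤ m)
    (h : ℕ) (p : ℕ) (hp : p.Prime) (hodd : Odd p) (hph : ¬ p ∣ h) :
    HasExpectation
      (fun n : ℕ =>
        D k (p ^ ((n + h).factorization p)) * D l (p ^ (n.factorization p)) *
          D m (p ^ ((n - h).factorization p)))
      ((1 - 1 / p) ^ (1 - (k : ℤ)) + (1 - 1 / p) ^ (1 - (l : ℤ))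
        + (1 - 1 / p) ^ (1 - (m : ℤ)) - 2) := by
  have hD₀ (k : ℕ) : D k (p ^ 0) = 1 := (D_prime_pow hp k 0).trans (Nat.choose_zero_right _)
  have hfin := finite_preimage_mul (f₁ := fun j => D k (p ^ j)) (f₂ := fun j => D l (p ^ j))
    (f₃ := fun j => D m (p ^ j)) (lt_D_prime_pow hp hk) (lt_D_prime_pow hp hl)
    (lt_D_prime_pow hp hm)
  have hsum := hasSum_mul_axesLaw (f₁ := fun j => D k (p ^ j)) (f₂ := fun j => D l (p ^ j))
    (f₃ := fun j => D m (p ^ j)) (hD₀ k) (hD₀ l) (hD₀ m) (hasSum_D_prime_pow_mul hp (by omega))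
    (hasSum_D_prime_pow_mul hp (by omega)) (hasSum_D_prime_pow_mul hp (by omega))
  -- `(e :)` elaborates `e` before unifying with the goal; the other order times out.
  exact (hasExpectation_comp (hasDensity_factorization_triple_eq hp hodd hph) hfin hsum :)

theorem expectation_triple_coprime_case (k l m : ℕ) (hk : 2 ≤ k) (hl : 2 ≤ l) (hm : 2 ≤ m)
    (h : ℕ) (hh : 0 < h) (p : ℕ) (hp : p.Prime) (hodd : Odd p) (hph : ¬ p ∣ h) :
    HasExpectation
      (fun n : ℕ =>
        D k (p ^ ((n + h).factorization p)) * D l (p ^ (n.factorization p)) *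
          D m (p ^ ((n - h).factorization p)))
      ((1 - 1 / p) ^ (1 - (k : ℤ)) + (1 - 1 / p) ^ (1 - (l : ℤ))
        + (1 - 1 / p) ^ (1 - (m : ℤ)) - 2) :=
  expectation_triple_coprime_case_general k l m hk hl hm h p hp hodd hph
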